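/- arXiv:2505.21587 — 4 statements merged into one kernel-verified Lean document; each statement's English description precedes it below -/
import Mathlib

section
/- Let α and β be types, A : Finset α and B : Finset β, and let a₁ b₁ : α → ℕ and a₂ b₂ : β → ℕ be colorings. Assume the refinement condition: for all x ∈ A and y ∈ B, b₁ x = b₂ y implies a₁ x = a₂ y. If the multiset of a-colors on A differs from the multiset of a-colors on B (i.e., A.val.map a₁ ≠ B.val.map a₂), then the multiset of b-colors on A differs from the multiset of b-colors on B (i.e., A.val.map b₁ ≠ B.val.map b₂). -/
namespace Multiset

variable {α β γ δ : Type*}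

/-- `s.map f = t.map g` means that `s` and `t` can be matched so that matched elements have
equal `f`- and `g`-values; the implication transports this matching to `f'` and `g'`. -/
theorem map_eq_map_of_map_eq_map {s : Multiset α} {t : Multiset β} {f : α → γ} {g : β → γ}
    {f' : α → δ} {g' : β → δ} (h : s.map f = t.map g)
    (hfg : ∀ x ∈ s, ∀ y ∈ t, f x = g y → f' x = g' y) :
    s.map f' = t.map g' := by
  rw [← rel_eq, rel_map] at h ⊢
  exact h.mono hfg

end Multiset

/-- Lemma 1: pointwise color reduction between two color-refinement models lifts to
multisets of colors on finite sets of cells. -/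
theorem multiset_color_reduction {α β : Type*} (A : Finset α) (B : Finset β)
    (a₁ b₁ : α → ℕ) (a₂ b₂ : β → ℕ)
    (hred : ∀ x ∈ A, ∀ y ∈ B, b₁ x = b₂ y → a₁ x = a₂ y)
    (hne : A.val.map a₁ ≠ B.val.map a₂) :
    A.val.map b₁ ≠ B.val.map b₂ :=
  fun h => hne (Multiset.map_eq_map_of_map_eq_map h hred)
end

section
/- Let α and β be types equipped with dimension functions dα : α → ℕ and dβ : β → ℕ, let A : Finset α and B : Finset β, and let a₁ b₁ : α → ℕ and a₂ b₂ : β → ℕ be colorings. Assume: (i) dimension-awareness of b: for all x ∈ A and y ∈ B, b₁ x = b₂ y implies dα x = dβ y; and (ii) dimension-wise refinement: for all x ∈ A and y ∈ B with dα x = dβ y, b₁ x = b₂ y implies a₁ x = a₂ y. If the multiset of a-colors on A differs from the multiset of a-colors on B (A.val.map a₁ ≠ B.val.map a₂), then the multiset of b-colors on A differs from the multiset of b-colors on B (A.val.map b₁ ≠ B.val.map b₂). -/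
theorem Multiset.map_eq_map_of_map_eq_map_s1 {α β γ δ : Type*} {s : Multiset α} {t : Multiset β}
    {f₁ : α → γ} {f₂ : β → γ} {g₁ : α → δ} {g₂ : β → δ}
    (hfg : ∀ x ∈ s, ∀ y ∈ t, g₁ x = g₂ y → f₁ x = f₂ y) (hg : s.map g₁ = t.map g₂) :
    s.map f₁ = t.map f₂ := by
  rw [← Multiset.rel_eq, Multiset.rel_map] at hg ⊢
  exact hg.mono hfg

/-- Theorem 2 (Appendix): dimension-wise color reduction plus dimension-awareness of the
finer coloring lifts to multisets of colors over all cells. -/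
theorem multiset_color_reduction_dimensionwise {α β : Type*}
    (dα : α → ℕ) (dβ : β → ℕ) (A : Finset α) (B : Finset β)
    (a₁ b₁ : α → ℕ) (a₂ b₂ : β → ℕ)
    (hdim : ∀ x ∈ A, ∀ y ∈ B, b₁ x = b₂ y → dα x = dβ y)
    (hred : ∀ x ∈ A, ∀ y ∈ B, dα x = dβ y → b₁ x = b₂ y → a₁ x = a₂ y)
    (hne : A.val.map a₁ ≠ B.val.map a₂) :
    A.val.map b₁ ≠ B.val.map b₂ := fun hb =>
  hne <| Multiset.map_eq_map_of_map_eq_map_s1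
    (fun x hx y hy hxy => hred x hx y hy (hdim x hx y hy hxy) hxy) hb
end

section
/- Let G₁ be a finite simple graph on V₁ and G₂ a finite simple graph on V₂. Let pairA : ℕ × Multiset ℕ → ℕ and pairB : ℕ × Multiset ℕ × ℕ → ℕ be injective functions. Let a₁⁰ : V₁ → ℕ, a₂⁰ : V₂ → ℕ, b₁⁰ : V₁ → ℕ, b₂⁰ : V₂ → ℕ be initial colorings, and for each t ∈ ℕ let e₁ᵗ : V₁ → ℕ and e₂ᵗ : V₂ → ℕ be arbitrary auxiliary data. Define recursively: aᵢᵗ⁺¹ v = pairA (aᵢᵗ v, (Gᵢ.neighborFinset v).val.map aᵢᵗ) and bᵢᵗ⁺¹ v = pairB (bᵢᵗ v, (Gᵢ.neighborFinset v).val.map bᵢᵗ, eᵢᵗ v) for i = 1, 2. If for all v : V₁ and w : V₂, b₁⁰ v = b₂⁰ w implies a₁⁰ v = a₂⁰ w, then for every t ∈ ℕ and all v : V₁, w : V₂, b₁ᵗ v = b₂ᵗ w implies a₁ᵗ v = a₂ᵗ w. -/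
theorem Multiset.map_eq_map_of_imp {σ τ α β : Type*} {s : Multiset σ} {t : Multiset τ}
    {f : σ → β} {g : τ → β} {f' : σ → α} {g' : τ → α}
    (h : ∀ x y, f x = g y → f' x = g' y) (hst : s.map f = t.map g) :
    s.map f' = t.map g' := by
  rw [← Multiset.rel_eq, Multiset.rel_map] at hst ⊢
  exact hst.mono fun x _ y _ => h x y

theorem wl_reduces_to_ccnn_general {V₁ V₂ : Type*} [Fintype V₁] [Fintype V₂]
    (G₁ : SimpleGraph V₁) (G₂ : SimpleGraph V₂)
    [DecidableRel G₁.Adj] [DecidableRel G₂.Adj]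
    (pairA : ℕ × Multiset ℕ → ℕ) (pairB : ℕ × Multiset ℕ × ℕ → ℕ)
    (hB : Function.Injective pairB)
    (a₁ : ℕ → V₁ → ℕ) (a₂ : ℕ → V₂ → ℕ) (b₁ : ℕ → V₁ → ℕ) (b₂ : ℕ → V₂ → ℕ)
    (e₁ : ℕ → V₁ → ℕ) (e₂ : ℕ → V₂ → ℕ)
    (ha₁ : ∀ t v, a₁ (t + 1) v = pairA (a₁ t v, (G₁.neighborFinset v).val.map (a₁ t)))
    (ha₂ : ∀ t w, a₂ (t + 1) w = pairA (a₂ t w, (G₂.neighborFinset w).val.map (a₂ t)))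
    (hb₁ : ∀ t v, b₁ (t + 1) v = pairB (b₁ t v, (G₁.neighborFinset v).val.map (b₁ t), e₁ t v))
    (hb₂ : ∀ t w, b₂ (t + 1) w = pairB (b₂ t w, (G₂.neighborFinset w).val.map (b₂ t), e₂ t w))
    (h0 : ∀ (v : V₁) (w : V₂), b₁ 0 v = b₂ 0 w → a₁ 0 v = a₂ 0 w) :
    ∀ (t : ℕ) (v : V₁) (w : V₂), b₁ t v = b₂ t w → a₁ t v = a₂ t w := by
  intro t
  induction t with
  | zero => exact h0
  | succ t ih =>
    intro v w h
    rw [hb₁, hb₂] at h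
    have hinputs := hB h
    simp only [Prod.mk.injEq] at hinputs
    rw [ha₁, ha₂, ih v w hinputs.1, Multiset.map_eq_map_of_imp ih hinputs.2.1]

/-- Induction of Theorem 1: the iterated 1-WL coloring (encoded via the injection `pairA`)
is topologically reduced to the iterated CCNN coloring (encoded via `pairB`, which at each
step additionally records arbitrary extra data `eᵗ`) at every iteration. -/
theorem wl_reduces_to_ccnn {V₁ V₂ : Type*} [Fintype V₁] [Fintype V₂]
    (G₁ : SimpleGraph V₁) (G₂ : SimpleGraph V₂)
    [DecidableRel G₁.Adj] [DecidableRel G₂.Adj]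
    (pairA : ℕ × Multiset ℕ → ℕ) (pairB : ℕ × Multiset ℕ × ℕ → ℕ)
    (hA : Function.Injective pairA) (hB : Function.Injective pairB)
    (a₁ : ℕ → V₁ → ℕ) (a₂ : ℕ → V₂ → ℕ) (b₁ : ℕ → V₁ → ℕ) (b₂ : ℕ → V₂ → ℕ)
    (e₁ : ℕ → V₁ → ℕ) (e₂ : ℕ → V₂ → ℕ)
    (ha₁ : ∀ t v, a₁ (t + 1) v = pairA (a₁ t v, (G₁.neighborFinset v).val.map (a₁ t)))
    (ha₂ : ∀ t w, a₂ (t + 1) w = pairA (a₂ t w, (G₂.neighborFinset w).val.map (a₂ t)))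
    (hb₁ : ∀ t v, b₁ (t + 1) v = pairB (b₁ t v, (G₁.neighborFinset v).val.map (b₁ t), e₁ t v))
    (hb₂ : ∀ t w, b₂ (t + 1) w = pairB (b₂ t w, (G₂.neighborFinset w).val.map (b₂ t), e₂ t w))
    (h0 : ∀ (v : V₁) (w : V₂), b₁ 0 v = b₂ 0 w → a₁ 0 v = a₂ 0 w) :
    ∀ (t : ℕ) (v : V₁) (w : V₂), b₁ t v = b₂ t w → a₁ t v = a₂ t w :=
  wl_reduces_to_ccnn_general G₁ G₂ pairA pairB hB a₁ a₂ b₁ b₂ e₁ e₂ ha₁ ha₂ hb₁ hb₂ h0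
end

section
/- There exist finite simple graphs G₁ (on vertex type V₁) and G₂ (on vertex type V₂) such that G₁ and G₂ are not isomorphic, and yet for every injective function pair : ℕ × Multiset ℕ → ℕ and every iteration t ∈ ℕ, the multisets of 1-WL colors agree: (Finset.univ : Finset V₁).val.map (wl₁ t) = (Finset.univ : Finset V₂).val.map (wl₂ t), where wlᵢ is the 1-WL coloring of Gᵢ from the constant initial coloring 0 via pair. -/
/-!
On a `d`-regular graph, 1-WL started from a constant coloring never separates two vertices: by
induction on `t`, every vertex sees its own color together with `d` copies of that same color, so
all vertices get a color depending only on `d` and `t`. Hence 1-WL cannot tell apart two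
`d`-regular graphs with the same number of vertices. The 6-cycle and the disjoint union of two
triangles (the circulant graph on `Fin 6` with jump `2`) are both `2`-regular, but only the former
is connected.
-/

/-- The 1-Weisfeiler–Lehman coloring of a finite simple graph, starting from the constant
initial coloring `0`, with multisets of neighbor colors encoded into `ℕ` by `pair`. -/
noncomputable def wl {V : Type*} [Fintype V] (G : SimpleGraph V)
    (pair : ℕ × Multiset ℕ → ℕ) : ℕ → V → ℕ
  | 0 => fun _ => 0
  | t + 1 => fun v =>
      letI : DecidableRel G.Adj := Classical.decRel _
      pair (wl G pair t v, (G.neighborFinset v).val.map (wl G pair t))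

def regularWLColor (pair : ℕ × Multiset ℕ → ℕ) (d : ℕ) : ℕ → ℕ
  | 0 => 0
  | t + 1 => pair (regularWLColor pair d t, Multiset.replicate d (regularWLColor pair d t))

namespace SimpleGraph

section Regular

variable {V : Type*} {G : SimpleGraph V} [G.LocallyFinite] {d : ℕ}

theorem IsRegularOfDegree.card_neighborFinset (hG : G.IsRegularOfDegree d) (v : V)
    [Fintype (G.neighborSet v)] : (G.neighborFinset v).card = d := by
  rw [card_neighborFinset_eq_degree]
  convert hG.degree_eq v

variable [Fintype V]

theorem wl_eq_regularWLColor_of_isRegularOfDegree (hG : G.IsRegularOfDegree d)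
    (pair : ℕ × Multiset ℕ → ℕ) (t : ℕ) (v : V) :
    wl G pair t v = regularWLColor pair d t := by
  induction t generalizing v with
  | zero => rfl
  | succ t ih =>
    dsimp only [wl]
    rw [ih v, Multiset.map_congr rfl fun w _ => ih w, Multiset.map_const', Finset.card_val,
      hG.card_neighborFinset, regularWLColor]

theorem univ_map_wl_of_isRegularOfDegree (hG : G.IsRegularOfDegree d)
    (pair : ℕ × Multiset ℕ → ℕ) (t : ℕ) :
    (Finset.univ : Finset V).val.map (wl G pair t) =
      Multiset.replicate (Fintype.card V) (regularWLColor pair d t) := by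
  rw [Multiset.map_congr rfl fun v _ => wl_eq_regularWLColor_of_isRegularOfDegree hG pair t v,
    Multiset.map_const', Finset.card_val, Finset.card_univ]

end Regular

theorem Reachable.apply_eq_of_forall_adj {V α : Type*} {G : SimpleGraph V} {f : V → α}
    (hf : ∀ u v, G.Adj u v → f u = f v) {u v : V} (h : G.Reachable u v) : f u = f v := by
  rw [reachable_eq_reflTransGen] at h
  simpa [Relation.reflTransGen_eq_self] using h.lift f hf

theorem circulantGraph_fin_six_two_isRegularOfDegree :
    (circulantGraph ({2} : Set (Fin 6))).IsRegularOfDegree 2 := by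
  unfold IsRegularOfDegree
  decide

theorem not_connected_circulantGraph_fin_six_two :
    ¬(circulantGraph ({2} : Set (Fin 6))).Connected := by
  have hparity : ∀ u v : Fin 6, (circulantGraph ({2} : Set (Fin 6))).Adj u v →
      u.val % 2 = v.val % 2 := by
    decide
  intro hconn
  exact absurd ((hconn.preconnected 0 1).apply_eq_of_forall_adj hparity) (by decide)

end SimpleGraph

/-- Existence half of Theorem 1: there are non-isomorphic finite simple graphs that are
indistinguishable by the 1-WL test at every iteration. -/
theorem exists_nonisomorphic_wl_indistinguishable :
    ∃ (n₁ n₂ : ℕ) (G₁ : SimpleGraph (Fin n₁)) (G₂ : SimpleGraph (Fin n₂)),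
      IsEmpty (G₁ ≃g G₂) ∧
      ∀ pair : ℕ × Multiset ℕ → ℕ, Function.Injective pair →
        ∀ t : ℕ, (Finset.univ : Finset (Fin n₁)).val.map (wl G₁ pair t) =
          (Finset.univ : Finset (Fin n₂)).val.map (wl G₂ pair t) := by
  refine ⟨6, 6, .cycleGraph 6, .circulantGraph {2}, ⟨fun e => ?_⟩, fun pair _ t => ?_⟩
  · exact SimpleGraph.not_connected_circulantGraph_fin_six_two
      (e.connected_iff.mp SimpleGraph.cycleGraph_connected)
  · rw [SimpleGraph.univ_map_wl_of_isRegularOfDegree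
        (fun _ => SimpleGraph.cycleGraph_degree_three_le) pair t,
      SimpleGraph.univ_map_wl_of_isRegularOfDegree
        SimpleGraph.circulantGraph_fin_six_two_isRegularOfDegree pair t]
end
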